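/- If F is a forest (an acyclic finite simple graph) with m edges, then exactly m edge reflections are required to transform F into the edgeless graph; that is, r(F) = m. In particular, a tree on n vertices requires exactly n − 1 edge reflections to reach the edgeless graph. -/

import Mathlib

/-- The pairs of vertices whose adjacency gets toggled by the edge reflection `t_{uv}^X`:
pairs consisting of `u` or `v` together with a vertex of `X \ {u, v}`. -/
def flipPair {V : Type*} (u v : V) (X : Set V) (a b : V) : Prop :=
  (a = u ∧ b ∈ X ∧ b ≠ u ∧ b ≠ v) ∨ (a = v ∧ b ∈ X ∧ b ≠ u ∧ b ≠ v) ∨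
  (b = u ∧ a ∈ X ∧ a ≠ u ∧ a ≠ v) ∨ (b = v ∧ a ∈ X ∧ a ≠ u ∧ a ≠ v)

lemma flipPair_comm {V : Type*} (u v : V) (X : Set V) (a b : V) :
    flipPair u v X a b ↔ flipPair u v X b a := by
  unfold flipPair; tauto

/-- The graph resulting from the edge reflection `t_{uv}^X`: the edge `uv` is deleted
and, for each `w ∈ X \ {u, v}`, the adjacencies `u–w` and `v–w` are toggled. -/
def reflectGraph {V : Type*} (G : SimpleGraph V) (u v : V) (X : Set V) :
    SimpleGraph V where
  Adj a b := a ≠ b ∧ ¬(a = u ∧ b = v) ∧ ¬(a = v ∧ b = u) ∧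
    ¬(G.Adj a b ↔ flipPair u v X a b)
  symm := by
    constructor
    intro a b h
    obtain ⟨h0, h1, h2, h3⟩ := h
    refine ⟨h0.symm, fun hh => h2 ⟨hh.2, hh.1⟩, fun hh => h1 ⟨hh.2, hh.1⟩, ?_⟩
    rw [G.adj_comm, ← flipPair_comm]
    exact h3
  loopless := ⟨fun a h => h.1 rfl⟩

/-- One edge reflection step: `u` and `v` are adjacent, `u, v ∈ X`, every vertex of `X`
other than `u` and `v` is adjacent to at least one of `u` and `v`, and `H` is the
reflected graph. -/
def EdgeReflStep {V : Type*} (G H : SimpleGraph V) : Prop :=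
  ∃ (u v : V) (X : Set V), G.Adj u v ∧ u ∈ X ∧ v ∈ X ∧
    (∀ w ∈ X, w ≠ u → w ≠ v → (G.Adj u w ∨ G.Adj v w)) ∧
    H = reflectGraph G u v X

/-- The least number of edge reflections needed to transform `G` into the edgeless graph. -/
noncomputable def reflNumber {V : Type*} (G : SimpleGraph V) : ℕ :=
  sInf {k | ∃ f : Fin (k + 1) → SimpleGraph V, f 0 = G ∧ f (Fin.last k) = ⊥ ∧
    ∀ i : Fin k, EdgeReflStep (f i.castSucc) (f i.succ)}

/-!
In a forest `F` the adjacent vertices `u`, `v` have no common neighbour, so every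
`w ∈ X \ {u, v}` is joined to exactly one of them and the reflection merely moves the edge `uw`
to `vw` or back. Swapping `u` and `v` inside the toggled pairs is therefore a bijection from the
edges of the reflected graph `H` onto `E(F) \ {uv}`, so each reflection removes exactly one edge.
`H` is again a forest: for an edge `e` of `H` with partner `e'` in `F`, the vertices `u` and `v`
stay connected in `F - e'`, so every other edge of `H` joins two vertices of the same component
of `F - e'`; as `e'` is a bridge of `F`, the edge `e` cannot be one of them, so it is a bridge of
`H`. Hence any reflection sequence from a forest to the edgeless graph has exactly `m` steps, and
deleting the edges one by one (`X = {u, v}`) gives such a sequence.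
-/

open SimpleGraph

section

variable {V : Type*}

theorem SimpleGraph.IsAcyclic.not_adj_of_adj_of_adj {G : SimpleGraph V} (hG : G.IsAcyclic)
    {u v w : V} (huv : G.Adj u v) (huw : G.Adj u w) : ¬G.Adj v w := by
  classical
  exact fun hvw => hG.cliqueFree le_rfl {u, v, w} (is3Clique_triple_iff.2 ⟨huv, huw, hvw⟩)

theorem SimpleGraph.Reachable.of_forall_adj {G H : SimpleGraph V}
    (h : ∀ a b, H.Adj a b → G.Reachable a b) {x y : V} (hxy : H.Reachable x y) :
    G.Reachable x y := by
  rw [reachable_iff_reflTransGen] at hxy ⊢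
  exact hxy.lift' id fun a b hab => (reachable_iff_reflTransGen a b).1 (h a b hab)

theorem SimpleGraph.isDiag_map_connectedComponentMk_of_mem_edgeSet {G : SimpleGraph V}
    {e : Sym2 V} (he : e ∈ G.edgeSet) : (e.map G.connectedComponentMk).IsDiag := by
  induction e using Sym2.ind with
  | _ a b => exact Sym2.mk_isDiag_iff.2 (ConnectedComponent.eq.2 (Adj.reachable he))

theorem SimpleGraph.IsBridge.not_isDiag_map_connectedComponentMk {G : SimpleGraph V}
    {e : Sym2 V} (he : G.IsBridge e) :
    ¬(e.map (G.deleteEdges {e}).connectedComponentMk).IsDiag := by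
  induction e using Sym2.ind with
  | _ a b =>
    rw [Sym2.map_mk, Sym2.mk_isDiag_iff, ConnectedComponent.eq]
    exact isBridge_iff.1 he

section FlipPair

variable {u v : V} {X : Set V} {a b : V}

theorem flipPair.ne_pair (h : flipPair u v X a b) : s(a, b) ≠ s(u, v) := by
  unfold flipPair at h
  rw [Ne, Sym2.eq_iff]
  grind

theorem flipPair.ne (h : flipPair u v X a b) : a ≠ b := by
  unfold flipPair at h
  grind

theorem flipPair.swap [DecidableEq V] (h : flipPair u v X a b) :
    flipPair u v X (Equiv.swap u v a) (Equiv.swap u v b) := by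
  unfold flipPair at h ⊢
  rcases h with ⟨rfl, hb, hbu, hbv⟩ | ⟨rfl, hb, hbu, hbv⟩ | ⟨rfl, ha, hau, hav⟩ |
      ⟨rfl, ha, hau, hav⟩ <;>
    simp_all [Equiv.swap_apply_of_ne_of_ne]

end FlipPair

section ReflectEdge

variable [DecidableEq V] {u v : V} {X : Set V}

instance flipPair.instSymm (u v : V) (X : Set V) : Std.Symm (flipPair u v X) :=
  ⟨fun a b => (flipPair_comm u v X a b).1⟩

open Classical in
/-- The edge of `F` from which an edge of `reflectGraph F u v X` arises: the toggled pairs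
`{u, w}` and `{v, w}` are exchanged, all other pairs are fixed. -/
noncomputable def reflectEdge (u v : V) (X : Set V) (e : Sym2 V) : Sym2 V :=
  if e ∈ Sym2.fromRel (flipPair.instSymm u v X) then e.map (Equiv.swap u v) else e

theorem reflectEdge_mk_of_flipPair {a b : V} (h : flipPair u v X a b) :
    reflectEdge u v X s(a, b) = s(Equiv.swap u v a, Equiv.swap u v b) :=
  if_pos h

theorem reflectEdge_mk_of_not_flipPair {a b : V} (h : ¬flipPair u v X a b) :
    reflectEdge u v X s(a, b) = s(a, b) :=
  if_neg h

theorem reflectEdge_involutive : Function.Involutive (reflectEdge u v X) := by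
  intro e
  induction e using Sym2.ind with | _ a b => ?_
  by_cases h : flipPair u v X a b
  · rw [reflectEdge_mk_of_flipPair h, reflectEdge_mk_of_flipPair h.swap,
      Equiv.swap_apply_self, Equiv.swap_apply_self]
  · rw [reflectEdge_mk_of_not_flipPair h, reflectEdge_mk_of_not_flipPair h]

theorem map_reflectEdge {β : Type*} {f : V → β} (hf : f u = f v) (e : Sym2 V) :
    (reflectEdge u v X e).map f = e.map f := by
  have hswap : f ∘ Equiv.swap u v = f := by
    funext z
    simp only [Function.comp_apply, Equiv.swap_apply_def]
    split_ifs <;> simp_all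
  unfold reflectEdge
  split_ifs
  · rw [Sym2.map_map, hswap]
  · rfl

end ReflectEdge

section Reflection

variable {F : SimpleGraph V} {u v : V} {X : Set V} {a b : V}

theorem reflectGraph_adj_of_flipPair (h : flipPair u v X a b) :
    (reflectGraph F u v X).Adj a b ↔ ¬F.Adj a b := by
  have hne := h.ne_pair
  rw [Ne, Sym2.eq_iff] at hne
  simp only [reflectGraph, h, iff_true]
  exact ⟨fun h' => h'.2.2.2,
    fun h' => ⟨h.ne, fun h'' => hne (.inl h''), fun h'' => hne (.inr h''), h'⟩⟩

theorem reflectGraph_adj_of_not_flipPair (h : ¬flipPair u v X a b) :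
    (reflectGraph F u v X).Adj a b ↔ F.Adj a b ∧ s(a, b) ≠ s(u, v) := by
  simp only [reflectGraph, h, iff_false, not_not, Ne, Sym2.eq_iff]
  constructor
  · rintro ⟨-, h₁, h₂, hadj⟩
    exact ⟨hadj, by tauto⟩
  · rintro ⟨hadj, h'⟩
    exact ⟨hadj.ne, fun h'' => h' (.inl h''), fun h'' => h' (.inr h''), hadj⟩

variable (hF : F.IsAcyclic) (huv : F.Adj u v)
  (hX : ∀ w ∈ X, w ≠ u → w ≠ v → F.Adj u w ∨ F.Adj v w)
include hF huv hX

theorem adj_swap_iff_not_adj_of_flipPair [DecidableEq V] (h : flipPair u v X a b) :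
    F.Adj (Equiv.swap u v a) (Equiv.swap u v b) ↔ ¬F.Adj a b := by
  have key : ∀ w ∈ X, w ≠ u → w ≠ v → (F.Adj v w ↔ ¬F.Adj u w) := fun w hw hwu hwv =>
    ⟨fun hvw huw => hF.not_adj_of_adj_of_adj huv huw hvw,
      (hX w hw hwu hwv).resolve_left⟩
  unfold flipPair at h
  rcases h with ⟨rfl, hb, hbu, hbv⟩ | ⟨rfl, hb, hbu, hbv⟩ | ⟨rfl, ha, hau, hav⟩ |
      ⟨rfl, ha, hau, hav⟩
  · simp [Equiv.swap_apply_of_ne_of_ne hbu hbv, key b hb hbu hbv]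
  · simp [Equiv.swap_apply_of_ne_of_ne hbu hbv, key b hb hbu hbv]
  · simp [Equiv.swap_apply_of_ne_of_ne hau hav, adj_comm _ a, key a ha hau hav]
  · simp [Equiv.swap_apply_of_ne_of_ne hau hav, adj_comm _ a, key a ha hau hav]

theorem mem_edgeSet_reflectGraph [DecidableEq V] {e : Sym2 V} :
    e ∈ (reflectGraph F u v X).edgeSet ↔
      reflectEdge u v X e ∈ F.edgeSet ∧ reflectEdge u v X e ≠ s(u, v) := by
  induction e using Sym2.ind with | _ a b => ?_
  by_cases h : flipPair u v X a b
  · rw [reflectEdge_mk_of_flipPair h, mem_edgeSet, mem_edgeSet, reflectGraph_adj_of_flipPair h,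
      adj_swap_iff_not_adj_of_flipPair hF huv hX h, and_iff_left h.swap.ne_pair]
  · rw [reflectEdge_mk_of_not_flipPair h, mem_edgeSet, mem_edgeSet,
      reflectGraph_adj_of_not_flipPair h]

theorem ncard_edgeSet_reflectGraph_add_one [Finite V] :
    (reflectGraph F u v X).edgeSet.ncard + 1 = F.edgeSet.ncard := by
  classical
  have hedges :
      (reflectGraph F u v X).edgeSet = reflectEdge u v X '' (F.edgeSet \ {s(u, v)}) := by
    rw [reflectEdge_involutive.image_eq_preimage_symm]
    ext e
    exact mem_edgeSet_reflectGraph hF huv hX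
  rw [hedges, Set.ncard_image_of_injective _ reflectEdge_involutive.injective]
  exact Set.ncard_sdiff_singleton_add_one huv (Set.toFinite _)

theorem reflectGraph_isAcyclic : (reflectGraph F u v X).IsAcyclic := by
  classical
  rw [isAcyclic_iff_forall_isBridge]
  intro e he
  induction e using Sym2.ind with | _ x y => ?_
  set e' := reflectEdge u v X s(x, y)
  obtain ⟨he'F, he'uv⟩ := (mem_edgeSet_reflectGraph hF huv hX).1 he
  set c := (F.deleteEdges {e'}).connectedComponentMk
  have hc : ∀ d, (reflectEdge u v X d).map c = d.map c := map_reflectEdge <|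
    ConnectedComponent.eq.2 <| Adj.reachable <| (deleteEdges_adj ..).2 ⟨huv, Ne.symm he'uv⟩
  have hbridge := (isAcyclic_iff_forall_isBridge.1 hF he'F).not_isDiag_map_connectedComponentMk
  rw [isBridge_iff]
  intro hreach
  refine hbridge ?_
  rw [hc, Sym2.map_mk, Sym2.mk_isDiag_iff, ConnectedComponent.eq]
  refine hreach.of_forall_adj fun a b hab => ?_
  rw [deleteEdges_adj, Set.mem_singleton_iff] at hab
  obtain ⟨hdF, -⟩ := (mem_edgeSet_reflectGraph (e := s(a, b)) hF huv hX).1 hab.1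
  have hd : reflectEdge u v X s(a, b) ∈ (F.deleteEdges {e'}).edgeSet := by
    rw [edgeSet_deleteEdges]
    exact ⟨hdF, reflectEdge_involutive.injective.ne hab.2⟩
  have := isDiag_map_connectedComponentMk_of_mem_edgeSet hd
  rwa [hc, Sym2.map_mk, Sym2.mk_isDiag_iff, ConnectedComponent.eq] at this

end Reflection

theorem not_flipPair_pair {u v a b : V} : ¬flipPair u v {u, v} a b := by
  unfold flipPair
  grind

theorem reflectGraph_pair (G : SimpleGraph V) (u v : V) :
    reflectGraph G u v {u, v} = G.deleteEdges {s(u, v)} := by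
  ext a b
  rw [reflectGraph_adj_of_not_flipPair not_flipPair_pair, deleteEdges_adj, Set.mem_singleton_iff]

theorem edgeReflStep_deleteEdges {G : SimpleGraph V} {u v : V} (huv : G.Adj u v) :
    EdgeReflStep G (G.deleteEdges {s(u, v)}) :=
  ⟨u, v, {u, v}, huv, by simp, by simp, by grind, (reflectGraph_pair G u v).symm⟩

section RelChain

variable {α : Type*} {r : α → α → Prop}

def RelChain (r : α → α → Prop) (k : ℕ) (a b : α) : Prop :=
  ∃ f : Fin (k + 1) → α, f 0 = a ∧ f (Fin.last k) = b ∧ ∀ i : Fin k, r (f i.castSucc) (f i.succ)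

theorem relChain_zero {a b : α} : RelChain r 0 a b ↔ a = b :=
  ⟨fun ⟨_, h0, hl, _⟩ => h0.symm.trans hl, fun h => ⟨fun _ => b, h.symm, rfl, Fin.elim0⟩⟩

theorem relChain_succ {k : ℕ} {a b : α} :
    RelChain r (k + 1) a b ↔ ∃ c, r a c ∧ RelChain r k c b := by
  constructor
  · rintro ⟨f, rfl, rfl, hf⟩
    exact ⟨f 1, hf 0, Fin.tail f, rfl, rfl, fun i => hf i.succ⟩
  · rintro ⟨c, hac, f, rfl, rfl, hf⟩
    exact ⟨Fin.cons a f, rfl, rfl, Fin.cases hac hf⟩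

end RelChain

theorem reflNumber_eq_sInf (G : SimpleGraph V) :
    reflNumber G = sInf {k | RelChain EdgeReflStep k G ⊥} := rfl

theorem relChain_bot_of_ncard_edgeSet [Finite V] :
    ∀ {k : ℕ} {G : SimpleGraph V}, G.edgeSet.ncard = k → RelChain EdgeReflStep k G ⊥
  | 0, G, hG => relChain_zero.2 <| edgeSet_eq_empty.1 <|
      (Set.ncard_eq_zero (Set.toFinite _)).1 hG
  | k + 1, G, hG => by
    obtain ⟨e, he⟩ := Set.nonempty_of_ncard_ne_zero (hG.trans_ne k.succ_ne_zero)
    induction e using Sym2.ind with | _ u v => ?_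
    refine relChain_succ.2
      ⟨_, edgeReflStep_deleteEdges (G := G) he, relChain_bot_of_ncard_edgeSet ?_⟩
    rw [edgeSet_deleteEdges, Set.ncard_sdiff_singleton_of_mem he, hG, Nat.add_sub_cancel]

theorem ncard_edgeSet_of_relChain_bot [Finite V] :
    ∀ {k : ℕ} {G : SimpleGraph V}, G.IsAcyclic → RelChain EdgeReflStep k G ⊥ →
      G.edgeSet.ncard = k
  | 0, G, _, hG => by simp [relChain_zero.1 hG]
  | k + 1, G, hF, hG => by
    obtain ⟨_, ⟨u, v, X, huv, -, -, hX, rfl⟩, hchain⟩ := relChain_succ.1 hG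
    rw [← ncard_edgeSet_reflectGraph_add_one hF huv hX,
      ncard_edgeSet_of_relChain_bot (reflectGraph_isAcyclic hF huv hX) hchain]

theorem reflNumber_of_isAcyclic [Finite V] {G : SimpleGraph V} (hG : G.IsAcyclic) :
    reflNumber G = G.edgeSet.ncard := by
  have : {k | RelChain EdgeReflStep k G ⊥} = {G.edgeSet.ncard} := by
    ext k
    exact ⟨fun h => (ncard_edgeSet_of_relChain_bot hG h).symm,
      fun h => relChain_bot_of_ncard_edgeSet h.symm⟩
  rw [reflNumber_eq_sInf, this, csInf_singleton]

end

/-- A forest with `m` edges requires exactly `m` edge reflections to become edgeless;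
in particular a tree on `n` vertices requires exactly `n - 1`. -/
theorem reflNumber_forest {V : Type*} [Fintype V] (F : SimpleGraph V) (m : ℕ)
    (hF : F.IsAcyclic) (hm : F.edgeSet.ncard = m) :
    reflNumber F = m ∧ (F.Connected → reflNumber F = Fintype.card V - 1) := by
  classical
  refine ⟨(reflNumber_of_isAcyclic hF).trans hm, fun hconn => ?_⟩
  rw [reflNumber_of_isAcyclic hF, ← IsTree.card_edgeFinset ⟨hconn, hF⟩, ← Set.ncard_coe_finset,
    coe_edgeFinset, Nat.add_sub_cancel]
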